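/- arXiv:1807.07727 — 5 statements merged into one kernel-verified Lean document; each statement's English description precedes it below -/
import Mathlib

section
/- Let N ≥ 1, let Ω ⊆ ℝ^N be a bounded open set, and let p, q, α, β be real numbers with 1 < q < p. Let f : ℝ^N → ℝ be integrable on Ω with f ≥ 0 almost everywhere on Ω. Let u : ℝ^N → ℝ be continuously differentiable with compact support contained in Ω, with u ≥ 0 everywhere and ∫_Ω u^q dx > 0. Assume that H_α(u) > 0 and that β < ∫_Ω ‖∇u‖^q dx / ∫_Ω u^q dx + K(p,q) · (H_α(u))^{(q−1)/(p−1)} · (∫_Ω f·u dx)^{(p−q)/(p−1)} / ∫_Ω u^q dx. Then H_α(u) + G_β(u) + ∫_Ω f·u dx > 0. (This is the pointwise core of Proposition 17 of the paper, where the hypothesis β < β_f(α) is replaced by the consequence β < Φ_α^+(u) actually used in its proof.) -/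
open MeasureTheory Real

/-! Weighted AM-GM with weights `θ = (q-1)/(p-1)` and `1-θ`: the constant `K(p,q)` is exactly
`(θ^θ (1-θ)^(1-θ))⁻¹`, so `K(p,q) H^θ F^(1-θ) ≤ H + F` for `H = H_α(u)` and `F = ∫ f u`.
Multiplying `β < Φ_α^+(u)` by `∫ u^q > 0` then gives `β ∫ u^q < ∫ ‖∇u‖^q + H + F`. -/

theorem rpow_mul_rpow_le_rpow_mul_rpow_mul_add {a b x y : ℝ} (ha : 0 < a) (hb : 0 < b)
    (hab : a + b = 1) (hx : 0 ≤ x) (hy : 0 ≤ y) :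
    x ^ a * y ^ b ≤ a ^ a * b ^ b * (x + y) := by
  have amgm := geom_mean_le_arith_mean2_weighted ha.le hb.le
    (div_nonneg hx ha.le) (div_nonneg hy hb.le) hab
  rw [div_rpow hx ha.le, div_rpow hy hb.le, mul_div_cancel₀ x ha.ne',
    mul_div_cancel₀ y hb.ne', div_mul_div_comm, div_le_iff₀ (by positivity)] at amgm
  linarith

theorem young_mul_rpow_mul_rpow_le_add {p q x y : ℝ} (hq : 1 < q) (hpq : q < p)
    (hx : 0 ≤ x) (hy : 0 ≤ y) :
    (p - 1) / (p - q) * ((p - q) / (q - 1)) ^ ((q - 1) / (p - 1))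
      * x ^ ((q - 1) / (p - 1)) * y ^ ((p - q) / (p - 1)) ≤ x + y := by
  have hp1 : p - 1 ≠ 0 := by linarith
  have hpq' : p - q ≠ 0 := by linarith
  set a := (q - 1) / (p - 1)
  set b := (p - q) / (p - 1)
  have ha : 0 < a := div_pos (by linarith) (by linarith)
  have hb : 0 < b := div_pos (by linarith) (by linarith)
  have hab : a + b = 1 := by simp only [a, b]; field_simp; ring
  have hba : (p - q) / (q - 1) = b / a := by
    simp only [a, b]
    rw [div_div_div_cancel_right₀ hp1]
  have hK : (p - 1) / (p - q) * ((p - q) / (q - 1)) ^ a = (a ^ a * b ^ b)⁻¹ := by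
    refine eq_inv_of_mul_eq_one_left ?_
    have cancel : b ^ a / a ^ a * (a ^ a * b ^ b) = b ^ a * b ^ b := by field_simp
    rw [hba, div_rpow hb.le ha.le, mul_assoc, cancel, ← rpow_add hb, hab, rpow_one]
    simp only [b]
    field_simp
  rw [hK, mul_assoc, inv_mul_le_iff₀ (by positivity)]
  exact rpow_mul_rpow_le_rpow_mul_rpow_mul_add ha hb hab hx hy

theorem stmt_0_general (N : ℕ)
    (Ω : Set (EuclideanSpace ℝ (Fin N)))
    (p q α β : ℝ) (hq : 1 < q) (hpq : q < p)
    (f : EuclideanSpace ℝ (Fin N) → ℝ)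
    (hf_nonneg : ∀ᵐ x ∂(volume.restrict Ω), 0 ≤ f x)
    (u : EuclideanSpace ℝ (Fin N) → ℝ)
    (hu_nonneg : ∀ x, 0 ≤ u x)
    (hu_q_pos : 0 < ∫ x in Ω, u x ^ q)
    (hH : 0 < (∫ x in Ω, ‖fderiv ℝ u x‖ ^ p) - α * ∫ x in Ω, |u x| ^ p)
    (hβ : β < (∫ x in Ω, ‖fderiv ℝ u x‖ ^ q) / (∫ x in Ω, u x ^ q)
      + ((p - 1) / (p - q)) * ((p - q) / (q - 1)) ^ ((q - 1) / (p - 1))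
        * ((∫ x in Ω, ‖fderiv ℝ u x‖ ^ p) - α * ∫ x in Ω, |u x| ^ p) ^ ((q - 1) / (p - 1))
        * (∫ x in Ω, f x * u x) ^ ((p - q) / (p - 1))
        / (∫ x in Ω, u x ^ q)) :
    0 < ((∫ x in Ω, ‖fderiv ℝ u x‖ ^ p) - α * ∫ x in Ω, |u x| ^ p)
      + ((∫ x in Ω, ‖fderiv ℝ u x‖ ^ q) - β * ∫ x in Ω, |u x| ^ q)
      + ∫ x in Ω, f x * u x := by
  have habs_q : (∫ x in Ω, |u x| ^ q) = ∫ x in Ω, u x ^ q :=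
    integral_congr_ae (.of_forall fun x => by simp only [abs_of_nonneg (hu_nonneg x)])
  have hfu : 0 ≤ ∫ x in Ω, f x * u x :=
    integral_nonneg_of_ae <| by
      filter_upwards [hf_nonneg] with x hx using mul_nonneg hx (hu_nonneg x)
  have young := young_mul_rpow_mul_rpow_le_add hq hpq hH.le hfu
  rw [← add_div, lt_div_iff₀ hu_q_pos] at hβ
  rw [habs_q]
  linarith

/-- Pointwise core of Proposition 17: if `H_α(u) > 0` and `β < Φ_α^+(u)`, then
`H_α(u) + G_β(u) + ∫_Ω f·u > 0`. -/
theorem stmt_0 (N : ℕ) (hN : 1 ≤ N)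
    (Ω : Set (EuclideanSpace ℝ (Fin N))) (hΩ_open : IsOpen Ω)
    (hΩ_bdd : Bornology.IsBounded Ω)
    (p q α β : ℝ) (hq : 1 < q) (hpq : q < p)
    (f : EuclideanSpace ℝ (Fin N) → ℝ)
    (hf_int : IntegrableOn f Ω)
    (hf_nonneg : ∀ᵐ x ∂(volume.restrict Ω), 0 ≤ f x)
    (u : EuclideanSpace ℝ (Fin N) → ℝ)
    (hu_smooth : ContDiff ℝ 1 u)
    (hu_supp : HasCompactSupport u)
    (hu_supp_sub : tsupport u ⊆ Ω)
    (hu_nonneg : ∀ x, 0 ≤ u x)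
    (hu_q_pos : 0 < ∫ x in Ω, u x ^ q)
    (hH : 0 < (∫ x in Ω, ‖fderiv ℝ u x‖ ^ p) - α * ∫ x in Ω, |u x| ^ p)
    (hβ : β < (∫ x in Ω, ‖fderiv ℝ u x‖ ^ q) / (∫ x in Ω, u x ^ q)
      + ((p - 1) / (p - q)) * ((p - q) / (q - 1)) ^ ((q - 1) / (p - 1))
        * ((∫ x in Ω, ‖fderiv ℝ u x‖ ^ p) - α * ∫ x in Ω, |u x| ^ p) ^ ((q - 1) / (p - 1))
        * (∫ x in Ω, f x * u x) ^ ((p - q) / (p - 1))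
        / (∫ x in Ω, u x ^ q)) :
    0 < ((∫ x in Ω, ‖fderiv ℝ u x‖ ^ p) - α * ∫ x in Ω, |u x| ^ p)
      + ((∫ x in Ω, ‖fderiv ℝ u x‖ ^ q) - β * ∫ x in Ω, |u x| ^ q)
      + ∫ x in Ω, f x * u x :=
  stmt_0_general N Ω p q α β hq hpq f hf_nonneg u hu_nonneg hu_q_pos hH hβ
end

section
/- Let N ≥ 1, let Ω ⊆ ℝ^N be a bounded open set, and let p, q, α, β be real numbers with 1 < q < p. Let f : ℝ^N → ℝ be integrable on Ω with f ≥ 0 almost everywhere on Ω. Let u : ℝ^N → ℝ be continuously differentiable with compact support contained in Ω, with u ≥ 0 everywhere and ∫_Ω u^q dx > 0. Assume that H_α(u) < 0 and that β > ∫_Ω ‖∇u‖^q dx / ∫_Ω u^q dx − K(p,q) · (−H_α(u))^{(q−1)/(p−1)} · (∫_Ω f·u dx)^{(p−q)/(p−1)} / ∫_Ω u^q dx. Then H_α(u) + G_β(u) − ∫_Ω f·u dx < 0. (This is the pointwise core of Proposition 18 of the paper, where the hypothesis β > β^f(α) is replaced by the consequence β > Φ_α^−(u) actually used in its proof.) 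-/
/-! Write `t = (q-1)/(p-1)` and `s = (p-q)/(p-1)`, so `t + s = 1`. The constant `K(p,q)` equals
`t^(-t) s^(-s)`, hence weighted AM-GM gives `K(p,q) a^t b^s = (a/t)^t (b/s)^s ≤ a + b` for
`a = -H_α(u)` and `b = ∫ f u ≥ 0`. Multiplying the hypothesis on `β` by `∫ u^q > 0` then yields
`G_β(u) < K(p,q) a^t b^s ≤ -H_α(u) + ∫ f u`. -/

open MeasureTheory Real

theorem inv_mul_div_rpow_mul_rpow_mul_rpow_le_add {s t a b : ℝ} (ht : 0 < t) (hs : 0 < s)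
    (hts : t + s = 1) (ha : 0 ≤ a) (hb : 0 ≤ b) :
    s⁻¹ * (s / t) ^ t * a ^ t * b ^ s ≤ a + b := by
  have hss : s ^ t * s ^ s = s := by rw [← rpow_add hs, hts, rpow_one]
  have hrewrite : s⁻¹ * (s / t) ^ t * a ^ t * b ^ s = (a / t) ^ t * (b / s) ^ s := by
    rw [div_rpow ha ht.le, div_rpow hb hs.le, div_rpow hs.le ht.le]
    field_simp
    linear_combination a ^ t * b ^ s * hss
  calc s⁻¹ * (s / t) ^ t * a ^ t * b ^ s = (a / t) ^ t * (b / s) ^ s := hrewrite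
    _ ≤ t * (a / t) + s * (b / s) :=
      geom_mean_le_arith_mean2_weighted ht.le hs.le (div_nonneg ha ht.le) (div_nonneg hb hs.le) hts
    _ = a + b := by rw [mul_div_cancel₀ _ ht.ne', mul_div_cancel₀ _ hs.ne']

theorem young_constant_mul_rpow_mul_rpow_le_add {p q a b : ℝ} (hq : 1 < q) (hpq : q < p)
    (ha : 0 ≤ a) (hb : 0 ≤ b) :
    (p - 1) / (p - q) * ((p - q) / (q - 1)) ^ ((q - 1) / (p - 1))
      * a ^ ((q - 1) / (p - 1)) * b ^ ((p - q) / (p - 1)) ≤ a + b := by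
  have hp1 : p - 1 ≠ 0 := by linarith
  have hq1 : q - 1 ≠ 0 := by linarith
  have hpq' : p - q ≠ 0 := by linarith
  have hK : (p - 1) / (p - q) * ((p - q) / (q - 1)) ^ ((q - 1) / (p - 1))
      = ((p - q) / (p - 1))⁻¹ * ((p - q) / (p - 1) / ((q - 1) / (p - 1))) ^ ((q - 1) / (p - 1)) := by
    congr 2 <;> field_simp
  rw [hK]
  refine inv_mul_div_rpow_mul_rpow_mul_rpow_le_add (by bound) (by bound) ?_ ha hb
  field_simp
  ring

theorem stmt_1_general (N : ℕ)
    (Ω : Set (EuclideanSpace ℝ (Fin N)))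
    (p q α β : ℝ) (hq : 1 < q) (hpq : q < p)
    (f : EuclideanSpace ℝ (Fin N) → ℝ)
    (hf_nonneg : ∀ᵐ x ∂(volume.restrict Ω), 0 ≤ f x)
    (u : EuclideanSpace ℝ (Fin N) → ℝ)
    (hu_nonneg : ∀ x, 0 ≤ u x)
    (hu_q_pos : 0 < ∫ x in Ω, u x ^ q)
    (hH : (∫ x in Ω, ‖fderiv ℝ u x‖ ^ p) - α * ∫ x in Ω, |u x| ^ p < 0)
    (hβ : (∫ x in Ω, ‖fderiv ℝ u x‖ ^ q) / (∫ x in Ω, u x ^ q)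
      - ((p - 1) / (p - q)) * ((p - q) / (q - 1)) ^ ((q - 1) / (p - 1))
        * (-((∫ x in Ω, ‖fderiv ℝ u x‖ ^ p) - α * ∫ x in Ω, |u x| ^ p)) ^ ((q - 1) / (p - 1))
        * (∫ x in Ω, f x * u x) ^ ((p - q) / (p - 1))
        / (∫ x in Ω, u x ^ q) < β) :
    ((∫ x in Ω, ‖fderiv ℝ u x‖ ^ p) - α * ∫ x in Ω, |u x| ^ p)
      + ((∫ x in Ω, ‖fderiv ℝ u x‖ ^ q) - β * ∫ x in Ω, |u x| ^ q)
      - (∫ x in Ω, f x * u x) < 0 := by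
  have habs_q : ∫ x in Ω, |u x| ^ q = ∫ x in Ω, u x ^ q := by
    simp_rw [abs_of_nonneg (hu_nonneg _)]
  have hfu_nonneg : 0 ≤ ∫ x in Ω, f x * u x :=
    integral_nonneg_of_ae <| by
      filter_upwards [hf_nonneg] with x hx
      exact mul_nonneg hx (hu_nonneg x)
  have hyoung := young_constant_mul_rpow_mul_rpow_le_add hq hpq (neg_nonneg.mpr hH.le) hfu_nonneg
  rw [div_sub_div_same, div_lt_iff₀ hu_q_pos] at hβ
  rw [habs_q]
  linarith

/-- Pointwise core of Proposition 18: if `H_α(u) < 0` and `β > Φ_α^-(u)`, then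
`H_α(u) + G_β(u) - ∫_Ω f·u < 0`. -/
theorem stmt_1 (N : ℕ) (hN : 1 ≤ N)
    (Ω : Set (EuclideanSpace ℝ (Fin N))) (hΩ_open : IsOpen Ω)
    (hΩ_bdd : Bornology.IsBounded Ω)
    (p q α β : ℝ) (hq : 1 < q) (hpq : q < p)
    (f : EuclideanSpace ℝ (Fin N) → ℝ)
    (hf_int : IntegrableOn f Ω)
    (hf_nonneg : ∀ᵐ x ∂(volume.restrict Ω), 0 ≤ f x)
    (u : EuclideanSpace ℝ (Fin N) → ℝ)
    (hu_smooth : ContDiff ℝ 1 u)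
    (hu_supp : HasCompactSupport u)
    (hu_supp_sub : tsupport u ⊆ Ω)
    (hu_nonneg : ∀ x, 0 ≤ u x)
    (hu_q_pos : 0 < ∫ x in Ω, u x ^ q)
    (hH : (∫ x in Ω, ‖fderiv ℝ u x‖ ^ p) - α * ∫ x in Ω, |u x| ^ p < 0)
    (hβ : (∫ x in Ω, ‖fderiv ℝ u x‖ ^ q) / (∫ x in Ω, u x ^ q)
      - ((p - 1) / (p - q)) * ((p - q) / (q - 1)) ^ ((q - 1) / (p - 1))
        * (-((∫ x in Ω, ‖fderiv ℝ u x‖ ^ p) - α * ∫ x in Ω, |u x| ^ p)) ^ ((q - 1) / (p - 1))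
        * (∫ x in Ω, f x * u x) ^ ((p - q) / (p - 1))
        / (∫ x in Ω, u x ^ q) < β) :
    ((∫ x in Ω, ‖fderiv ℝ u x‖ ^ p) - α * ∫ x in Ω, |u x| ^ p)
      + ((∫ x in Ω, ‖fderiv ℝ u x‖ ^ q) - β * ∫ x in Ω, |u x| ^ q)
      - (∫ x in Ω, f x * u x) < 0 :=
  stmt_1_general N Ω p q α β hq hpq f hf_nonneg u hu_nonneg hu_q_pos hH hβ
end

section
/- Let p, q, a, c, g be real numbers with 1 < q < p, a > 0 and c ≥ 0. If g > −K(p,q) · a^{(q−1)/(p−1)} · c^{(p−q)/(p−1)}, then for every real t > 0 one has a·t^p + g·t^q + c·t > 0; in particular (taking t = 1), a + g + c > 0. (This is the one-variable positivity criterion underlying the proof of Proposition 17 of the paper.) -/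
open Real

/-!
With the weights `u = (q - 1)/(p - 1)` and `v = (p - q)/(p - 1)` one has `u + v = 1` and
`p u + v = q`, so weighted AM-GM applied to `a t^p` and `c t` gives
`(a/u)^u (c/v)^v t^q ≤ a t^p + c t`. The coefficient `(a/u)^u (c/v)^v` is exactly
`K(p,q) a^u c^v`, hence `g t^q > -(a t^p + c t)`.
-/

theorem rpow_div_mul_rpow_div_le_add {u v x y : ℝ} (hu : 0 < u) (hv : 0 < v) (huv : u + v = 1)
    (hx : 0 ≤ x) (hy : 0 ≤ y) : (x / u) ^ u * (y / v) ^ v ≤ x + y := by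
  have h := geom_mean_le_arith_mean2_weighted hu.le hv.le (div_nonneg hx hu.le)
    (div_nonneg hy hv.le) huv
  rwa [mul_div_cancel₀ x hu.ne', mul_div_cancel₀ y hv.ne'] at h

theorem div_sub_one_add_div_sub_one {p q : ℝ} (hp : p ≠ 1) :
    (q - 1) / (p - 1) + (p - q) / (p - 1) = 1 := by
  rw [← add_div, div_eq_one_iff_eq (sub_ne_zero.mpr hp)]
  ring

theorem mul_div_sub_one_add_div_sub_one {p q : ℝ} (hp : p ≠ 1) :
    p * ((q - 1) / (p - 1)) + (p - q) / (p - 1) = q := by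
  field_simp [sub_ne_zero.mpr hp]
  ring

/-- The constant `K(p, q)`. -/
noncomputable def sharpConst (p q : ℝ) : ℝ :=
  (p - 1) / (p - q) * ((p - q) / (q - 1)) ^ ((q - 1) / (p - 1))

section
variable {p q : ℝ} (hq : 1 < q) (hpq : q < p)
include hq hpq

theorem sharpConst_eq :
    sharpConst p q = ((q - 1) / (p - 1)) ^ (-((q - 1) / (p - 1))) *
      ((p - q) / (p - 1)) ^ (-((p - q) / (p - 1))) := by
  set u := (q - 1) / (p - 1) with hu_def
  set v := (p - q) / (p - 1) with hv_def
  have hu : 0 < u := div_pos (by linarith) (by linarith)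
  have hv : 0 < v := div_pos (by linarith) (by linarith)
  have huv : u = 1 - v := eq_sub_of_add_eq (div_sub_one_add_div_sub_one (by linarith))
  have h1 : (p - 1) / (p - q) = v⁻¹ := by rw [hv_def, inv_div]
  have h2 : (p - q) / (q - 1) = v / u := by
    rw [hu_def, hv_def, div_div_div_cancel_right₀ (by linarith : p - 1 ≠ 0)]
  rw [sharpConst, ← hu_def, h1, h2, div_rpow hv.le hu.le, rpow_neg hu.le, rpow_neg hv.le]
  nth_rw 1 [huv]
  rw [rpow_sub hv, rpow_one]
  field_simp

theorem sharpConst_mul_le {a c t : ℝ} (ha : 0 ≤ a) (hc : 0 ≤ c) (ht : 0 < t) :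
    sharpConst p q * a ^ ((q - 1) / (p - 1)) * c ^ ((p - q) / (p - 1)) * t ^ q
      ≤ a * t ^ p + c * t := by
  rw [sharpConst_eq hq hpq]
  set u := (q - 1) / (p - 1) with hu_def
  set v := (p - q) / (p - 1) with hv_def
  have hu : 0 < u := div_pos (by linarith) (by linarith)
  have hv : 0 < v := div_pos (by linarith) (by linarith)
  have huv : u + v = 1 := div_sub_one_add_div_sub_one (by linarith)
  have hq_eq : q = p * u + v := (mul_div_sub_one_add_div_sub_one (by linarith)).symm
  calc u ^ (-u) * v ^ (-v) * a ^ u * c ^ v * t ^ q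
      = (a * t ^ p / u) ^ u * (c * t / v) ^ v := by
        rw [div_rpow (by positivity) hu.le, div_rpow (by positivity) hv.le,
          mul_rpow ha (by positivity), mul_rpow hc ht.le, ← rpow_mul ht.le, rpow_neg hu.le,
          rpow_neg hv.le, hq_eq, rpow_add ht]
        ring
    _ ≤ a * t ^ p + c * t :=
        rpow_div_mul_rpow_div_le_add hu hv huv (by positivity) (by positivity)

end

/-- One-variable positivity criterion underlying the proof of Proposition 17. -/
theorem stmt_2 (p q a c g : ℝ) (hq : 1 < q) (hpq : q < p) (ha : 0 < a) (hc : 0 ≤ c)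
    (hg : -(((p - 1) / (p - q)) * ((p - q) / (q - 1)) ^ ((q - 1) / (p - 1))
      * a ^ ((q - 1) / (p - 1)) * c ^ ((p - q) / (p - 1))) < g) :
    (∀ t : ℝ, 0 < t → 0 < a * t ^ p + g * t ^ q + c * t) ∧ 0 < a + g + c := by
  have hpos : ∀ t : ℝ, 0 < t → 0 < a * t ^ p + g * t ^ q + c * t := by
    intro t ht
    have hgt := mul_lt_mul_of_pos_right hg (rpow_pos_of_pos ht q)
    have hbound := sharpConst_mul_le hq hpq ha.le hc ht
    rw [sharpConst] at hbound
    linarith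
  refine ⟨hpos, ?_⟩
  simpa using hpos 1 one_pos
end

section
/- Let p, q, a, c be real numbers with 1 < q < p, a > 0 and c > 0. Then for any real g the following are equivalent: (i) a·t^p + g·t^q + c·t > 0 for every real t > 0; (ii) g > −K(p,q) · a^{(q−1)/(p−1)} · c^{(p−q)/(p−1)}. (This is the sharp characterization of positivity of the auxiliary function Q_β established in the proof of Proposition 17 of the paper.) -/
/-!
Dividing by `t ^ q`, condition (i) reads `-g < a t^(p-q) + c t^(-(q-1))` for all `t > 0`. For the
weights `w₁ = (q-1)/(p-1)`, `w₂ = (p-q)/(p-1)` one has `(p-q) w₁ = (q-1) w₂`, so the powers of `t`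
cancel in weighted AM-GM, which bounds the right side below by
`(a/w₁)^w₁ (c/w₂)^w₂ = K(p,q) a^w₁ c^w₂`. The bound is attained at the `t` where the two
AM-GM terms `a t^(p-q) / w₁` and `c t^(-(q-1)) / w₂` agree, so it is the infimum.
-/

open Real

section WeightedAMGM

variable {w₁ w₂ : ℝ}

theorem rpow_div_mul_rpow_div_mul_le_add (hw₁ : 0 < w₁) (hw₂ : 0 < w₂) (hw : w₁ + w₂ = 1)
    {a c x y : ℝ} (ha : 0 ≤ a) (hc : 0 ≤ c) (hx : 0 ≤ x) (hy : 0 ≤ y) :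
    (a / w₁) ^ w₁ * (c / w₂) ^ w₂ * (x ^ w₁ * y ^ w₂) ≤ a * x + c * y := by
  have h := geom_mean_le_arith_mean2_weighted hw₁.le hw₂.le
    (by positivity : 0 ≤ a / w₁ * x) (by positivity : 0 ≤ c / w₂ * y) hw
  rw [mul_rpow (by positivity) hx, mul_rpow (by positivity) hy] at h
  convert h using 1
  · ring
  · field_simp

theorem rpow_div_mul_rpow_div_mul_eq_add (hw₁ : 0 < w₁) (hw₂ : 0 < w₂) (hw : w₁ + w₂ = 1)
    {a c x y : ℝ} (ha : 0 ≤ a) (hc : 0 ≤ c) (hx : 0 ≤ x) (hy : 0 ≤ y)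
    (hbal : a * x / w₁ = c * y / w₂) :
    (a / w₁) ^ w₁ * (c / w₂) ^ w₂ * (x ^ w₁ * y ^ w₂) = a * x + c * y := by
  have hcy : c * y = w₂ * (a * x / w₁) := by rw [hbal]; field_simp
  calc (a / w₁) ^ w₁ * (c / w₂) ^ w₂ * (x ^ w₁ * y ^ w₂)
      = (a * x / w₁) ^ w₁ * (c * y / w₂) ^ w₂ := by
        rw [← div_mul_eq_mul_div, ← div_mul_eq_mul_div, mul_rpow (by positivity) hx,
          mul_rpow (by positivity) hy]
        ring
    _ = a * x / w₁ := by
        rw [← hbal, ← rpow_add' (by positivity) (by linarith), hw, rpow_one]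
    _ = a * x + c * y := by rw [hcy]; field_simp; linear_combination (a * x) * hw.symm

theorem rpow_div_mul_rpow_div_eq (hw₁ : 0 < w₁) (hw₂ : 0 < w₂) (hw : w₁ + w₂ = 1)
    {a c : ℝ} (ha : 0 ≤ a) (hc : 0 ≤ c) :
    (a / w₁) ^ w₁ * (c / w₂) ^ w₂ = 1 / w₂ * (w₂ / w₁) ^ w₁ * a ^ w₁ * c ^ w₂ := by
  have hw₂w₂ : w₂ ^ w₂ = w₂ / w₂ ^ w₁ := by
    rw [eq_div_iff (by positivity), ← rpow_add hw₂, add_comm, hw, rpow_one]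
  rw [div_rpow ha hw₁.le, div_rpow hc hw₂.le, div_rpow hw₂.le hw₁.le, hw₂w₂]
  field_simp

end WeightedAMGM

section PowerSum

variable {α β w₁ w₂ : ℝ}

theorem rpow_mul_rpow_neg_eq_one (hbal : α * w₁ = β * w₂) {t : ℝ} (ht : 0 < t) :
    (t ^ α) ^ w₁ * (t ^ (-β)) ^ w₂ = 1 := by
  rw [← rpow_mul ht.le, ← rpow_mul ht.le, ← rpow_add ht, hbal, neg_mul, add_neg_cancel, rpow_zero]

theorem le_mul_rpow_add_mul_rpow_neg (hw₁ : 0 < w₁) (hw₂ : 0 < w₂) (hw : w₁ + w₂ = 1)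
    (hbal : α * w₁ = β * w₂) {a c t : ℝ} (ha : 0 ≤ a) (hc : 0 ≤ c) (ht : 0 < t) :
    (a / w₁) ^ w₁ * (c / w₂) ^ w₂ ≤ a * t ^ α + c * t ^ (-β) := by
  simpa only [rpow_mul_rpow_neg_eq_one hbal ht, mul_one] using
    rpow_div_mul_rpow_div_mul_le_add hw₁ hw₂ hw ha hc (rpow_nonneg ht.le α)
      (rpow_nonneg ht.le (-β))

theorem exists_mul_rpow_add_mul_rpow_neg_eq (hw₁ : 0 < w₁) (hw₂ : 0 < w₂) (hw : w₁ + w₂ = 1)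
    (hbal : α * w₁ = β * w₂) (hαβ : α + β ≠ 0) {a c : ℝ} (ha : 0 < a) (hc : 0 < c) :
    ∃ t > 0, a * t ^ α + c * t ^ (-β) = (a / w₁) ^ w₁ * (c / w₂) ^ w₂ := by
  set r := c * w₁ / (a * w₂)
  have hr : 0 < r := by positivity
  set t := r ^ (α + β)⁻¹
  have ht : 0 < t := by positivity
  have htr : t ^ α = r * t ^ (-β) := by
    rw [← rpow_inv_rpow hr.le hαβ, ← rpow_add ht]; ring_nf
  refine ⟨t, ht, ?_⟩
  have := rpow_div_mul_rpow_div_mul_eq_add hw₁ hw₂ hw ha.le hc.le (rpow_nonneg ht.le α)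
      (rpow_nonneg ht.le (-β)) (by rw [htr]; simp only [r]; field_simp)
  rwa [rpow_mul_rpow_neg_eq_one hbal ht, mul_one, eq_comm] at this

theorem forall_pos_lt_mul_rpow_add_mul_rpow_neg_iff (hw₁ : 0 < w₁) (hw₂ : 0 < w₂)
    (hw : w₁ + w₂ = 1) (hbal : α * w₁ = β * w₂) (hαβ : α + β ≠ 0) {a c m : ℝ} (ha : 0 < a)
    (hc : 0 < c) :
    (∀ t : ℝ, 0 < t → m < a * t ^ α + c * t ^ (-β)) ↔ m < (a / w₁) ^ w₁ * (c / w₂) ^ w₂ := by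
  constructor
  · intro h
    obtain ⟨t, ht, heq⟩ := exists_mul_rpow_add_mul_rpow_neg_eq hw₁ hw₂ hw hbal hαβ ha hc
    exact heq ▸ h t ht
  · intro h t ht
    exact h.trans_le (le_mul_rpow_add_mul_rpow_neg hw₁ hw₂ hw hbal ha.le hc.le ht)

end PowerSum

/-- Sharp characterization of positivity of the auxiliary function `Q_β`
from the proof of Proposition 17. -/
theorem stmt_3 (p q a c : ℝ) (hq : 1 < q) (hpq : q < p) (ha : 0 < a) (hc : 0 < c) (g : ℝ) :
    (∀ t : ℝ, 0 < t → 0 < a * t ^ p + g * t ^ q + c * t) ↔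
      -(((p - 1) / (p - q)) * ((p - q) / (q - 1)) ^ ((q - 1) / (p - 1))
        * a ^ ((q - 1) / (p - 1)) * c ^ ((p - q) / (p - 1))) < g := by
  set w₁ := (q - 1) / (p - 1)
  set w₂ := (p - q) / (p - 1)
  have hw₁ : 0 < w₁ := div_pos (by linarith) (by linarith)
  have hw₂ : 0 < w₂ := div_pos (by linarith) (by linarith)
  have hw : w₁ + w₂ = 1 := by
    rw [← add_div, div_eq_one_iff_eq (by linarith)]; ring
  have hbal : (p - q) * w₁ = (q - 1) * w₂ := by simp only [w₁, w₂]; ring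
  have hK : (p - 1) / (p - q) * ((p - q) / (q - 1)) ^ w₁ = 1 / w₂ * (w₂ / w₁) ^ w₁ := by
    rw [one_div_div, div_div_div_cancel_right₀ (by linarith)]
  have hfactor : ∀ t : ℝ, 0 < t →
      a * t ^ p + g * t ^ q + c * t = t ^ q * (a * t ^ (p - q) + g + c * t ^ (-(q - 1))) := by
    intro t ht
    have htp : t ^ q * t ^ (p - q) = t ^ p := by rw [← rpow_add ht, add_sub_cancel]
    have ht1 : t ^ q * t ^ (-(q - 1)) = t := by
      rw [← rpow_add ht, show q + -(q - 1) = 1 by ring, rpow_one]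
    linear_combination -a * htp - c * ht1
  rw [hK, ← rpow_div_mul_rpow_div_eq hw₁ hw₂ hw ha.le hc.le, neg_lt,
    ← forall_pos_lt_mul_rpow_add_mul_rpow_neg_iff hw₁ hw₂ hw hbal (by linarith) ha hc]
  refine forall₂_congr fun t ht => ?_
  rw [hfactor t ht, mul_pos_iff_of_pos_left (rpow_pos_of_pos ht q)]
  constructor <;> intro <;> linarith
end

section
/- Let p, q, a, c, g, t be real numbers with 1 < q < p, a > 0, c > 0 and t > 0. Suppose that a·t^p + g·t^q + c·t = 0 and p·a·t^p + q·g·t^q + c·t = 0. Then t = ((q−1)/(p−q))^{1/(p−1)} · (c/a)^{1/(p−1)} and g = −K(p,q) · a^{(q−1)/(p−1)} · c^{(p−q)/(p−1)}. (This is the double-root identification solved explicitly in the proof of Proposition 17 of the paper, equations (35)–(37).) -/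
open Real

/-!
Both equations are linear in `a t^p` and `g t^q`. Eliminating `g t^q` gives
`(p - q) a t^(p-1) = (q - 1) c`, which determines `t`; eliminating `a t^p` gives
`(p - q) g t^(q-1) = -(p - 1) c`, and substituting the value of `t` determines `g`.
-/

section DoubleRoot

variable {p q a c g t : ℝ}

theorem rpow_sub_one_eq_of_double_root (hpq : p ≠ q) (ha : a ≠ 0) (ht : 0 < t)
    (h1 : a * t ^ p + g * t ^ q + c * t = 0)
    (h2 : p * (a * t ^ p) + q * (g * t ^ q) + c * t = 0) :
    t ^ (p - 1) = (q - 1) / (p - q) * (c / a) := by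
  have hpq' : p - q ≠ 0 := sub_ne_zero.2 hpq
  have key : (p - q) * a * t ^ (p - 1) * t = (q - 1) * c * t := by
    rw [mul_assoc _ (t ^ (p - 1)), ← rpow_add_one ht.ne', sub_add_cancel]
    linear_combination h2 - q * h1
  field_simp
  linear_combination mul_right_cancel₀ ht.ne' key

theorem coeff_eq_of_double_root (hpq : p ≠ q) (ht : 0 < t)
    (h1 : a * t ^ p + g * t ^ q + c * t = 0)
    (h2 : p * (a * t ^ p) + q * (g * t ^ q) + c * t = 0) :
    g = -((p - 1) / (p - q) * c * t ^ (1 - q)) := by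
  have hpq' : p - q ≠ 0 := sub_ne_zero.2 hpq
  have htq : t ^ q ≠ 0 := (rpow_pos_of_pos ht q).ne'
  rw [rpow_sub ht, rpow_one]
  field_simp
  linear_combination p * h1 - h2

end DoubleRoot

namespace Real

theorem div_rpow_neg {x y : ℝ} (hx : 0 ≤ x) (hy : 0 ≤ y) (s : ℝ) :
    (x / y) ^ (-s) = (y / x) ^ s := by
  rw [rpow_neg (div_nonneg hx hy), ← inv_rpow (div_nonneg hx hy), inv_div]

theorem mul_div_rpow_neg {a c : ℝ} (ha : 0 ≤ a) (hc : 0 < c) (s : ℝ) :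
    c * (c / a) ^ (-s) = a ^ s * c ^ (1 - s) := by
  rw [div_rpow_neg hc.le ha, div_rpow ha hc.le, rpow_sub hc, rpow_one]
  ring

end Real

/-- Double-root identification from the proof of Proposition 17, equations (35)–(37). -/
theorem stmt_4 (p q a c g t : ℝ) (hq : 1 < q) (hpq : q < p) (ha : 0 < a) (hc : 0 < c)
    (ht : 0 < t)
    (h1 : a * t ^ p + g * t ^ q + c * t = 0)
    (h2 : p * (a * t ^ p) + q * (g * t ^ q) + c * t = 0) :
    t = ((q - 1) / (p - q)) ^ (1 / (p - 1)) * (c / a) ^ (1 / (p - 1)) ∧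
      g = -(((p - 1) / (p - q)) * ((p - q) / (q - 1)) ^ ((q - 1) / (p - 1))
        * a ^ ((q - 1) / (p - 1)) * c ^ ((p - q) / (p - 1))) := by
  have hq1 : 0 ≤ q - 1 := by linarith
  have hpq' : 0 ≤ p - q := by linarith
  have hp1 : p - 1 ≠ 0 := by linarith
  have htX : t = ((q - 1) / (p - q) * (c / a)) ^ (1 / (p - 1)) := by
    rw [← rpow_sub_one_eq_of_double_root hpq.ne' ha.ne' ht h1 h2, ← rpow_mul ht.le,
      mul_one_div_cancel hp1, rpow_one]
  refine ⟨by rwa [mul_rpow (by positivity) (by positivity)] at htX, ?_⟩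
  have hexp : 1 / (p - 1) * (1 - q) = -((q - 1) / (p - 1)) := by field_simp; ring
  have hsub : (p - q) / (p - 1) = 1 - (q - 1) / (p - 1) := by field_simp; ring
  rw [coeff_eq_of_double_root hpq.ne' ht h1 h2, htX, ← rpow_mul (by positivity), hexp,
    mul_rpow (by positivity) (by positivity), div_rpow_neg hq1 hpq', hsub,
    mul_assoc _ (a ^ _), ← mul_div_rpow_neg ha.le hc]
  ring
end
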